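/- Rule III with singleton inner ∨'s preserves truth in both directions: suppose in the premise Φ{(A ∨_i C) ∨_k (B ∨_j D)} and conclusion Φ{(A ∨_k B) ∨_m (C ∨_k D)} the clusters i, j, m are singletons and i, j, m are distinct IDs not occurring elsewhere in the respective cirquents. Then for any interpretation *, the premise is true under * if and only if the conclusion is true under *. -/
import Mathlib


/-- Cirquents: NNF propositional formulas; literals are (atom, sign),
    each ∨-occurrence carries a cluster ID (a natural number). -/
inductive Cirq : Type where
  | lit : ℕ → Bool → Cirq
  | and : Cirq → Cirq → Cirq
  | or  : ℕ → Cirq → Cirq → Cirq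

/-- Metatruth w.r.t. an interpretation `I` and metaselection `f`
    (`f k = true` means `left`). -/
def metatrue (I : ℕ → Bool) (f : ℕ → Bool) : Cirq → Prop
  | .lit n s => I n = s
  | .and A B => metatrue I f A ∧ metatrue I f B
  | .or k A B => (f k = true ∧ metatrue I f A) ∨ (f k = false ∧ metatrue I f B)

/-- Classical truth of the underlying formula (cluster IDs erased). -/
def ctrue (I : ℕ → Bool) : Cirq → Prop
  | .lit n s => I n = s
  | .and A B => ctrue I A ∧ ctrue I B
  | .or _ A B => ctrue I A ∨ ctrue I B

/-- Truth of a cirquent under an interpretation. -/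
def cirqTrue (I : ℕ → Bool) (C : Cirq) : Prop := ∃ f : ℕ → Bool, metatrue I f C

def valid (C : Cirq) : Prop := ∀ I : ℕ → Bool, cirqTrue I C

/-- Number of ∨-occurrences in cluster `k`. -/
def cnt (k : ℕ) : Cirq → ℕ
  | .lit _ _ => 0
  | .and A B => cnt k A + cnt k B
  | .or m A B => (if m = k then 1 else 0) + cnt k A + cnt k B

/-- Set of cluster IDs occurring in a cirquent. -/
def ids : Cirq → Set ℕ
  | .lit _ _ => ∅
  | .and A B => ids A ∪ ids B
  | .or k A B => insert k (ids A ∪ ids B)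

/-- A cirquent is classical iff every cluster is a singleton. -/
def classicalCirq (C : Cirq) : Prop := ∀ k : ℕ, cnt k C ≤ 1

/-- Renaming of cluster IDs. -/
def rename (ρ : ℕ → ℕ) : Cirq → Cirq
  | .lit n s => .lit n s
  | .and A B => .and (rename ρ A) (rename ρ B)
  | .or k A B => .or (ρ k) (rename ρ A) (rename ρ B)

/-- One-hole cirquent contexts. -/
inductive Ctx : Type where
  | hole : Ctx
  | andL : Ctx → Cirq → Ctx
  | andR : Cirq → Ctx → Ctx
  | orL : ℕ → Ctx → Cirq → Ctx
  | orR : ℕ → Cirq → Ctx → Ctx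

/-- Plugging a cirquent into the hole of a context. -/
def Ctx.plug : Ctx → Cirq → Cirq
  | .hole, X => X
  | .andL Φ C, X => .and (Φ.plug X) C
  | .andR C Φ, X => .and C (Φ.plug X)
  | .orL k Φ C, X => .or k (Φ.plug X) C
  | .orR k C Φ, X => .or k C (Φ.plug X)

/-- The inference rules of IF_p, as a one-step relation premise ↦ conclusion. -/
inductive Step : Cirq → Cirq → Prop where
  | ruleIL (Φ Ψ : Ctx) (A B C : Cirq) (k : ℕ) :
      Step (Φ.plug (.or k (Ψ.plug A) C)) (Φ.plug (.or k (Ψ.plug (.or k A B)) C))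
  | ruleIR (Φ Ψ : Ctx) (A B C : Cirq) (k : ℕ) :
      Step (Φ.plug (.or k C (Ψ.plug A))) (Φ.plug (.or k C (Ψ.plug (.or k B A))))
  | ruleIIL_and (Φ : Ctx) (A B C : Cirq) (k : ℕ) :
      Step (Φ.plug (.or k (.and A C) (.and B C))) (Φ.plug (.and (.or k A B) C))
  | ruleIIR_and (Φ : Ctx) (A B C : Cirq) (k : ℕ) :
      Step (Φ.plug (.or k (.and C A) (.and C B))) (Φ.plug (.and C (.or k A B)))
  | ruleIIL_orN (Φ : Ctx) (A B C : Cirq) (k l : ℕ)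
      (hns : 2 ≤ cnt l (Φ.plug (.or l (.or k A B) C))) :
      Step (Φ.plug (.or k (.or l A C) (.or l B C))) (Φ.plug (.or l (.or k A B) C))
  | ruleIIR_orN (Φ : Ctx) (A B C : Cirq) (k l : ℕ)
      (hns : 2 ≤ cnt l (Φ.plug (.or l C (.or k A B)))) :
      Step (Φ.plug (.or k (.or l C A) (.or l C B))) (Φ.plug (.or l C (.or k A B)))
  | ruleIIL_orS (Φ : Ctx) (A B C : Cirq) (ρ₁ ρ₂ : ℕ → ℕ) (k i j m : ℕ)
      (hij : i ≠ j) (hik : i ≠ k) (hjk : j ≠ k) (him : i ≠ m) (hjm : j ≠ m) (hkm : k ≠ m)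
      (hi : cnt i (Φ.plug (.or k (.or i A (rename ρ₁ C)) (.or j B (rename ρ₂ C)))) = 1)
      (hj : cnt j (Φ.plug (.or k (.or i A (rename ρ₁ C)) (.or j B (rename ρ₂ C)))) = 1)
      (hm : cnt m (Φ.plug (.or m (.or k A B) C)) = 1)
      (hfix : ∀ x ∈ ids C, cnt x (Φ.plug (.or m (.or k A B) C)) ≠ 1 → ρ₁ x = x ∧ ρ₂ x = x)
      (hfresh : ∀ x ∈ ids C, cnt x (Φ.plug (.or m (.or k A B) C)) = 1 →
        cnt (ρ₁ x) (Φ.plug (.or k (.or i A (rename ρ₁ C)) (.or j B (rename ρ₂ C)))) = 1 ∧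
        cnt (ρ₂ x) (Φ.plug (.or k (.or i A (rename ρ₁ C)) (.or j B (rename ρ₂ C)))) = 1 ∧
        ρ₁ x ≠ ρ₂ x)
      (hinj₁ : Set.InjOn ρ₁ (ids C)) (hinj₂ : Set.InjOn ρ₂ (ids C)) :
      Step (Φ.plug (.or k (.or i A (rename ρ₁ C)) (.or j B (rename ρ₂ C))))
           (Φ.plug (.or m (.or k A B) C))
  | ruleIIR_orS (Φ : Ctx) (A B C : Cirq) (ρ₁ ρ₂ : ℕ → ℕ) (k i j m : ℕ)
      (hij : i ≠ j) (hik : i ≠ k) (hjk : j ≠ k) (him : i ≠ m) (hjm : j ≠ m) (hkm : k ≠ m)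
      (hi : cnt i (Φ.plug (.or k (.or i (rename ρ₁ C) A) (.or j (rename ρ₂ C) B))) = 1)
      (hj : cnt j (Φ.plug (.or k (.or i (rename ρ₁ C) A) (.or j (rename ρ₂ C) B))) = 1)
      (hm : cnt m (Φ.plug (.or m C (.or k A B))) = 1)
      (hfix : ∀ x ∈ ids C, cnt x (Φ.plug (.or m C (.or k A B))) ≠ 1 → ρ₁ x = x ∧ ρ₂ x = x)
      (hfresh : ∀ x ∈ ids C, cnt x (Φ.plug (.or m C (.or k A B))) = 1 →
        cnt (ρ₁ x) (Φ.plug (.or k (.or i (rename ρ₁ C) A) (.or j (rename ρ₂ C) B))) = 1 ∧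
        cnt (ρ₂ x) (Φ.plug (.or k (.or i (rename ρ₁ C) A) (.or j (rename ρ₂ C) B))) = 1 ∧
        ρ₁ x ≠ ρ₂ x)
      (hinj₁ : Set.InjOn ρ₁ (ids C)) (hinj₂ : Set.InjOn ρ₂ (ids C)) :
      Step (Φ.plug (.or k (.or i (rename ρ₁ C) A) (.or j (rename ρ₂ C) B)))
           (Φ.plug (.or m C (.or k A B)))
  | ruleIII_and (Φ : Ctx) (A B C D : Cirq) (k : ℕ) :
      Step (Φ.plug (.or k (.and A C) (.and B D))) (Φ.plug (.and (.or k A B) (.or k C D)))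
  | ruleIII_orN (Φ : Ctx) (A B C D : Cirq) (k l : ℕ)
      (hns : 2 ≤ cnt l (Φ.plug (.or l (.or k A B) (.or k C D)))) :
      Step (Φ.plug (.or k (.or l A C) (.or l B D))) (Φ.plug (.or l (.or k A B) (.or k C D)))
  | ruleIII_orS (Φ : Ctx) (A B C D : Cirq) (k i j m : ℕ)
      (hij : i ≠ j) (hik : i ≠ k) (hjk : j ≠ k) (him : i ≠ m) (hjm : j ≠ m) (hkm : k ≠ m)
      (hi : cnt i (Φ.plug (.or k (.or i A C) (.or j B D))) = 1)
      (hj : cnt j (Φ.plug (.or k (.or i A C) (.or j B D))) = 1)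
      (hm : cnt m (Φ.plug (.or m (.or k A B) (.or k C D))) = 1) :
      Step (Φ.plug (.or k (.or i A C) (.or j B D))) (Φ.plug (.or m (.or k A B) (.or k C D)))

/-- Provability in IF_p: start from a classical tautology, apply rules. -/
inductive Proves : Cirq → Prop where
  | ax (C : Cirq) (hc : classicalCirq C) (ht : ∀ I : ℕ → Bool, ctrue I C) : Proves C
  | step (P C : Cirq) (hp : Proves P) (hs : Step P C) : Proves C

def ccnt (k : ℕ) : Ctx → ℕ
  | .hole => 0
  | .andL Φ C => ccnt k Φ + cnt k C
  | .andR C Φ => cnt k C + ccnt k Φ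
  | .orL l Φ C => (if l = k then 1 else 0) + ccnt k Φ + cnt k C
  | .orR l C Φ => (if l = k then 1 else 0) + cnt k C + ccnt k Φ

def cids : Ctx → Set ℕ
  | .hole => ∅
  | .andL Φ C => cids Φ ∪ ids C
  | .andR C Φ => ids C ∪ cids Φ
  | .orL l Φ C => insert l (cids Φ ∪ ids C)
  | .orR l C Φ => insert l (ids C ∪ cids Φ)

lemma cnt_plug (n : ℕ) (Φ : Ctx) (X : Cirq) :
    cnt n (Φ.plug X) = ccnt n Φ + cnt n X := by
  induction Φ with
  | hole => simp [Ctx.plug, ccnt]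
  | andL Φ C ih => simp only [Ctx.plug, ccnt, cnt, ih]; omega
  | andR C Φ ih => simp only [Ctx.plug, ccnt, cnt, ih]; omega
  | orL l Φ C ih => simp only [Ctx.plug, ccnt, cnt, ih]; omega
  | orR l C Φ ih => simp only [Ctx.plug, ccnt, cnt, ih]; omega

lemma not_mem_ids {n : ℕ} {C : Cirq} (h : cnt n C = 0) : n ∉ ids C := by
  induction C with
  | lit a s => simp [ids]
  | and A B ihA ihB =>
    simp only [cnt] at h
    simp only [ids, Set.mem_union]
    push_neg
    exact ⟨ihA (by omega), ihB (by omega)⟩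
  | or l A B ihA ihB =>
    simp only [cnt] at h
    simp only [ids, Set.mem_insert_iff, Set.mem_union]
    push_neg
    split_ifs at h with hl
    · omega
    · exact ⟨fun e => hl e.symm, ihA (by omega), ihB (by omega)⟩

lemma not_mem_cids {n : ℕ} {Φ : Ctx} (h : ccnt n Φ = 0) : n ∉ cids Φ := by
  induction Φ with
  | hole => simp [cids]
  | andL Φ C ih =>
    simp only [ccnt] at h
    simp only [cids, Set.mem_union]
    push_neg
    exact ⟨ih (by omega), not_mem_ids (by omega)⟩
  | andR C Φ ih =>
    simp only [ccnt] at h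
    simp only [cids, Set.mem_union]
    push_neg
    exact ⟨not_mem_ids (by omega), ih (by omega)⟩
  | orL l Φ C ih =>
    simp only [ccnt] at h
    simp only [cids, Set.mem_insert_iff, Set.mem_union]
    push_neg
    split_ifs at h with hl
    · omega
    · exact ⟨fun e => hl e.symm, ih (by omega), not_mem_ids (by omega)⟩
  | orR l C Φ ih =>
    simp only [ccnt] at h
    simp only [cids, Set.mem_insert_iff, Set.mem_union]
    push_neg
    split_ifs at h with hl
    · omega
    · exact ⟨fun e => hl e.symm, not_mem_ids (by omega), ih (by omega)⟩

lemma metatrue_congr {I f g : ℕ → Bool} {C : Cirq}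
    (h : ∀ n ∈ ids C, f n = g n) : metatrue I f C ↔ metatrue I g C := by
  induction C with
  | lit a s => simp [metatrue]
  | and A B ihA ihB =>
    simp only [metatrue]
    rw [ihA fun n hn => h n (Set.mem_union_left _ hn),
        ihB fun n hn => h n (Set.mem_union_right _ hn)]
  | or l A B ihA ihB =>
    simp only [metatrue]
    rw [h l (Set.mem_insert _ _),
        ihA fun n hn => h n (Set.mem_insert_of_mem _ (Set.mem_union_left _ hn)),
        ihB fun n hn => h n (Set.mem_insert_of_mem _ (Set.mem_union_right _ hn))]

lemma plug_congr {I f g : ℕ → Bool} {Φ : Ctx} {X Y : Cirq}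
    (h : ∀ n ∈ cids Φ, f n = g n) (hxy : metatrue I f X ↔ metatrue I g Y) :
    metatrue I f (Φ.plug X) ↔ metatrue I g (Φ.plug Y) := by
  induction Φ with
  | hole => exact hxy
  | andL Φ C ih =>
    simp only [Ctx.plug, metatrue]
    rw [ih fun n hn => h n (Set.mem_union_left _ hn),
        metatrue_congr fun n hn => h n (Set.mem_union_right _ hn)]
  | andR C Φ ih =>
    simp only [Ctx.plug, metatrue]
    rw [ih fun n hn => h n (Set.mem_union_right _ hn),
        metatrue_congr fun n hn => h n (Set.mem_union_left _ hn)]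
  | orL l Φ C ih =>
    simp only [Ctx.plug, metatrue]
    rw [h l (Set.mem_insert _ _),
        ih fun n hn => h n (Set.mem_insert_of_mem _ (Set.mem_union_left _ hn)),
        metatrue_congr fun n hn => h n (Set.mem_insert_of_mem _ (Set.mem_union_right _ hn))]
  | orR l C Φ ih =>
    simp only [Ctx.plug, metatrue]
    rw [h l (Set.mem_insert _ _),
        ih fun n hn => h n (Set.mem_insert_of_mem _ (Set.mem_union_right _ hn)),
        metatrue_congr fun n hn => h n (Set.mem_insert_of_mem _ (Set.mem_union_left _ hn))]

theorem stmt9 (Φ : Ctx) (A B C D : Cirq) (k i j m : ℕ)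
    (hij : i ≠ j) (hik : i ≠ k) (hjk : j ≠ k) (him : i ≠ m) (hjm : j ≠ m) (hkm : k ≠ m)
    (hi : cnt i (Φ.plug (.or k (.or i A C) (.or j B D))) = 1)
    (hj : cnt j (Φ.plug (.or k (.or i A C) (.or j B D))) = 1)
    (hm : cnt m (Φ.plug (.or m (.or k A B) (.or k C D))) = 1)
    (I : ℕ → Bool) :
    cirqTrue I (Φ.plug (.or k (.or i A C) (.or j B D))) ↔
    cirqTrue I (Φ.plug (.or m (.or k A B) (.or k C D))) := by
  rw [cnt_plug] at hi hj hm
  simp [cnt, Ne.symm hik, Ne.symm hij, Ne.symm hjk, hij, hkm] at hi hj hm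
  have niΦ : i ∉ cids Φ := not_mem_cids (by omega)
  have njΦ : j ∉ cids Φ := not_mem_cids (by omega)
  have nmΦ : m ∉ cids Φ := not_mem_cids (by omega)
  have niA : i ∉ ids A := not_mem_ids (by omega)
  have niB : i ∉ ids B := not_mem_ids (by omega)
  have niC : i ∉ ids C := not_mem_ids (by omega)
  have niD : i ∉ ids D := not_mem_ids (by omega)
  have njA : j ∉ ids A := not_mem_ids (by omega)
  have njB : j ∉ ids B := not_mem_ids (by omega)
  have njC : j ∉ ids C := not_mem_ids (by omega)
  have njD : j ∉ ids D := not_mem_ids (by omega)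
  have nmA : m ∉ ids A := not_mem_ids (by omega)
  have nmB : m ∉ ids B := not_mem_ids (by omega)
  have nmC : m ∉ ids C := not_mem_ids (by omega)
  have nmD : m ∉ ids D := not_mem_ids (by omega)
  constructor
  · rintro ⟨f, hf⟩
    set g : ℕ → Bool := fun n => if n = m then (if f k then f i else f j) else f n with hgdef
    have agree : ∀ n ∈ cids Φ, f n = g n := by
      intro n hn
      have : n ≠ m := fun e => nmΦ (e ▸ hn)
      simp [hgdef, this]
    have gk : g k = f k := by simp [hgdef, hkm]
    have gm : g m = if f k then f i else f j := by simp [hgdef]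
    have gA : metatrue I g A ↔ metatrue I f A :=
      metatrue_congr fun n hn => by
        have : n ≠ m := fun e => nmA (e ▸ hn); simp [hgdef, this]
    have gB : metatrue I g B ↔ metatrue I f B :=
      metatrue_congr fun n hn => by
        have : n ≠ m := fun e => nmB (e ▸ hn); simp [hgdef, this]
    have gC : metatrue I g C ↔ metatrue I f C :=
      metatrue_congr fun n hn => by
        have : n ≠ m := fun e => nmC (e ▸ hn); simp [hgdef, this]
    have gD : metatrue I g D ↔ metatrue I f D :=
      metatrue_congr fun n hn => by
        have : n ≠ m := fun e => nmD (e ▸ hn); simp [hgdef, this]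
    refine ⟨g, (plug_congr agree ?_).mp hf⟩
    simp only [metatrue, gA, gB, gC, gD, gk, gm]
    cases hfk : f k <;> cases hfi : f i <;> cases hfj : f j <;>
      simp [hfk, hfi, hfj] <;> tauto
  · rintro ⟨g, hg⟩
    set f : ℕ → Bool := fun n => if n = i then g m else if n = j then g m else g n with hfdef
    have agree : ∀ n ∈ cids Φ, f n = g n := by
      intro n hn
      have h1 : n ≠ i := fun e => niΦ (e ▸ hn)
      have h2 : n ≠ j := fun e => njΦ (e ▸ hn)
      simp [hfdef, h1, h2]
    have fk : f k = g k := by simp [hfdef, Ne.symm hik, Ne.symm hjk]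
    have fi : f i = g m := by simp [hfdef]
    have fj : f j = g m := by simp [hfdef, Ne.symm hij]
    have fA : metatrue I f A ↔ metatrue I g A :=
      metatrue_congr fun n hn => by
        have h1 : n ≠ i := fun e => niA (e ▸ hn)
        have h2 : n ≠ j := fun e => njA (e ▸ hn)
        simp [hfdef, h1, h2]
    have fB : metatrue I f B ↔ metatrue I g B :=
      metatrue_congr fun n hn => by
        have h1 : n ≠ i := fun e => niB (e ▸ hn)
        have h2 : n ≠ j := fun e => njB (e ▸ hn)
        simp [hfdef, h1, h2]
    have fC : metatrue I f C ↔ metatrue I g C :=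
      metatrue_congr fun n hn => by
        have h1 : n ≠ i := fun e => niC (e ▸ hn)
        have h2 : n ≠ j := fun e => njC (e ▸ hn)
        simp [hfdef, h1, h2]
    have fD : metatrue I f D ↔ metatrue I g D :=
      metatrue_congr fun n hn => by
        have h1 : n ≠ i := fun e => niD (e ▸ hn)
        have h2 : n ≠ j := fun e => njD (e ▸ hn)
        simp [hfdef, h1, h2]
    refine ⟨f, (plug_congr agree ?_).mpr hg⟩
    simp only [metatrue, fA, fB, fC, fD, fk, fi, fj]
    cases hgk : g k <;> cases hgm : g m <;>
      simp [hgk, hgm] <;> tauto
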